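/- With Δ_s as above, the function χ_{∂B} ≡ 1 satisfies Δ_s 1 = 0, and for distinct edges ε, ε' from the root, the function (1/μ[ε]) χ_ε − (1/μ[ε']) χ_{ε'} is an eigenvector of Δ_s with eigenvalue λ_0 = −1/G_s(root); the span of these functions has dimension n_0 − 1, where n_0 is the number of edges from the root. -/

import Mathlib

/-!
On a root edge `ε` only the `k = 0` term of `Δ_s` survives, so
`Δ_s χ_ε = -(G root)⁻¹ • (χ_ε - μ[ε] • χ_root)`, and the `χ_root` parts cancel in the normalized
differences `μ[ε]⁻¹ • χ_ε - μ[ε']⁻¹ • χ_ε'`. These differences span the `vectorSpan` of the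
linearly, hence affinely, independent family `μ[ε]⁻¹ • χ_ε`, which has dimension `n₀ - 1`.
-/

open Module Submodule

theorem finrank_span_sub_of_linearIndependent {K V α : Type*} [DivisionRing K] [AddCommGroup V]
    [Module K V] {s : Finset α} {f : α → V} (hf : LinearIndependent K fun i : s => f i) :
    finrank K (span K {v | ∃ i ∈ s, ∃ j ∈ s, i ≠ j ∧ v = f i - f j}) = s.card - 1 := by
  have hspan : span K {v | ∃ i ∈ s, ∃ j ∈ s, i ≠ j ∧ v = f i - f j} =
      vectorSpan K (Set.range fun i : s => f i) := by
    rw [vectorSpan_def]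
    apply le_antisymm
    · refine span_mono ?_
      rintro _ ⟨i, hi, j, hj, -, rfl⟩
      exact Set.vsub_mem_vsub ⟨⟨i, hi⟩, rfl⟩ ⟨⟨j, hj⟩, rfl⟩
    · rw [span_le]
      rintro _ ⟨_, ⟨i, rfl⟩, _, ⟨j, rfl⟩, rfl⟩
      by_cases hij : i = j
      · simp [hij]
      · exact subset_span ⟨i, i.2, j, j.2, fun h => hij (Subtype.ext h), rfl⟩
  rcases s.eq_empty_or_nonempty with rfl | hs
  · rw [hspan, Set.range_eq_empty, vectorSpan_empty, finrank_bot, Finset.card_empty]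
  · rw [hspan, hf.affineIndependent.finrank_vectorSpan]
    simp [Nat.sub_add_cancel hs.card_pos]

theorem apply_χ_child_of_len_eq_zero {P M : Type*} [AddCommGroup M] [Module ℝ M]
    {len : P → ℕ} {par : P → P} {children : P → Finset P} {trunc : P → ℕ → P}
    (htrunc : ∀ (γ : P) (k : ℕ), trunc γ k = par^[len γ - k] γ)
    (hchild : ∀ γ c : P, c ∈ children γ → par c = γ ∧ len c = len γ + 1)
    {μ G : P → ℝ} {χ : P → M} {Δ : M →ₗ[ℝ] M}
    (hΔ : ∀ γ : P, Δ (χ γ) = -∑ k ∈ Finset.range (len γ),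
      (G (trunc γ k))⁻¹ •
        ((μ (trunc γ k) - μ (trunc γ (k + 1))) • χ γ -
          μ γ • (χ (trunc γ k) - χ (trunc γ (k + 1)))))
    {root : P} (hrootlen : len root = 0) {ε : P} (hε : ε ∈ children root) :
    Δ (χ ε) = (-(G root)⁻¹) • (μ root • χ ε - μ ε • χ root) := by
  obtain ⟨hpar, hlen⟩ := hchild root ε hε
  have htrunc_zero : trunc ε 0 = root := by simp [htrunc, hlen, hrootlen, hpar]
  have htrunc_one : trunc ε 1 = ε := by simp [htrunc, hlen, hrootlen]
  rw [hΔ, hlen, hrootlen, zero_add, Finset.sum_range_one, htrunc_zero, htrunc_one]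
  module

theorem stmt_10_general (P : Type*) (M : Type*) [AddCommGroup M] [Module ℝ M]
    (len : P → ℕ) (par : P → P) (children : P → Finset P)
    (trunc : P → ℕ → P)
    (htrunc : ∀ (γ : P) (k : ℕ), trunc γ k = par^[len γ - k] γ)
    (hchild : ∀ γ c : P, c ∈ children γ → par c = γ ∧ len c = len γ + 1)
    (μ G : P → ℝ) (hμ : ∀ γ, 0 < μ γ)
    (χ : P → M)
    (hind : ∀ γ : P, LinearIndependent ℝ (fun c : (children γ : Finset P) => χ (c : P)))
    (Δ : M →ₗ[ℝ] M)
    (hΔ : ∀ γ : P, Δ (χ γ) = -∑ k ∈ Finset.range (len γ),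
      (G (trunc γ k))⁻¹ •
        ((μ (trunc γ k) - μ (trunc γ (k + 1))) • χ γ -
          μ γ • (χ (trunc γ k) - χ (trunc γ (k + 1)))))
    (root : P) (hrootlen : len root = 0) (hμroot : μ root = 1) :
    Δ (χ root) = 0 ∧
    (∀ ε ∈ children root, ∀ ε' ∈ children root,
      Δ ((μ ε)⁻¹ • χ ε - (μ ε')⁻¹ • χ ε') =
        (-(G root)⁻¹) • ((μ ε)⁻¹ • χ ε - (μ ε')⁻¹ • χ ε')) ∧
    Module.finrank ℝ (Submodule.span ℝ
      {v : M | ∃ ε ∈ children root, ∃ ε' ∈ children root,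
        ε ≠ ε' ∧ v = (μ ε)⁻¹ • χ ε - (μ ε')⁻¹ • χ ε'}) =
      (children root).card - 1 := by
  have hΔ_child {ε} (hε : ε ∈ children root) :=
    apply_χ_child_of_len_eq_zero htrunc hchild hΔ hrootlen hε
  refine ⟨by simp [hΔ, hrootlen], fun ε hε ε' hε' => ?_, ?_⟩
  · have := (hμ ε).ne'
    have := (hμ ε').ne'
    rw [map_sub, map_smul, map_smul, hΔ_child hε, hΔ_child hε', hμroot]
    match_scalars <;> field_simp
    ring
  · refine finrank_span_sub_of_linearIndependent (f := fun c => (μ c)⁻¹ • χ c) ?_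
    exact (hind root).units_smul fun c => Units.mk0 (μ c)⁻¹ (inv_ne_zero (hμ c).ne')

/-- the constant function `1 = χ_{∂B}` satisfies `Δ_s 1 = 0`,
and for distinct root edges `ε ≠ ε'` the function
`(1/μ[ε]) χ_ε − (1/μ[ε']) χ_{ε'}` is an eigenvector of `Δ_s` with eigenvalue
`λ₀ = −1/G_s(root)`; the span of these has dimension `n₀ − 1` where `n₀` is
the number of root edges. Setting as in Statement 9, with `root` the empty
path (`len root = 0`, `χ root = χ_{∂B}`, `μ root = 1`). -/
theorem stmt_10 (P : Type*) (M : Type*) [AddCommGroup M] [Module ℝ M]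
    (len : P → ℕ) (par : P → P) (children : P → Finset P)
    (trunc : P → ℕ → P)
    (htrunc : ∀ (γ : P) (k : ℕ), trunc γ k = par^[len γ - k] γ)
    (hchild : ∀ γ c : P, c ∈ children γ → par c = γ ∧ len c = len γ + 1)
    (μ G : P → ℝ) (hμ : ∀ γ, 0 < μ γ) (hG : ∀ γ, 0 < G γ)
    (χ : P → M)
    (hind : ∀ γ : P, LinearIndependent ℝ (fun c : (children γ : Finset P) => χ (c : P)))
    (Δ : M →ₗ[ℝ] M)
    (hΔ : ∀ γ : P, Δ (χ γ) = -∑ k ∈ Finset.range (len γ),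
      (G (trunc γ k))⁻¹ •
        ((μ (trunc γ k) - μ (trunc γ (k + 1))) • χ γ -
          μ γ • (χ (trunc γ k) - χ (trunc γ (k + 1)))))
    (root : P) (hrootlen : len root = 0) (hμroot : μ root = 1) :
    Δ (χ root) = 0 ∧
    (∀ ε ∈ children root, ∀ ε' ∈ children root,
      Δ ((μ ε)⁻¹ • χ ε - (μ ε')⁻¹ • χ ε') =
        (-(G root)⁻¹) • ((μ ε)⁻¹ • χ ε - (μ ε')⁻¹ • χ ε')) ∧
    Module.finrank ℝ (Submodule.span ℝ
      {v : M | ∃ ε ∈ children root, ∃ ε' ∈ children root,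
        ε ≠ ε' ∧ v = (μ ε)⁻¹ • χ ε - (μ ε')⁻¹ • χ ε'}) =
      (children root).card - 1 :=
  stmt_10_general P M len par children trunc htrunc hchild μ G hμ χ hind Δ hΔ root hrootlen hμroot
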